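/- There exist an integer k0 ≥ 1 and unit vectors v_1, …, v_{k0} ∈ D2 such that D2 decomposes as the orthogonal direct sum D2 = (span{v_1} ⊕ V_{v_1}(0)) ⊕ (span{v_2} ⊕ V_{v_2}(0)) ⊕ ⋯ ⊕ (span{v_{k0}} ⊕ V_{v_{k0}}(0)), and moreover v_l ∈ V_{v_j}(τ) whenever j ≠ l. -/

import Mathlib

/-!
Parallelism of the cubic form, evaluated at `(e₁, v)` with `v ∈ D₂` and split along
`ℝe₁ ⊕ D₂ ⊕ D₃`, gives the cyclic identity
`K(v,L(u,u')) + K(u',L(v,u)) + K(u,L(v,u')) = (λ₁η/2)(⟨u,u'⟩v + ⟨v,u⟩u' + ⟨v,u'⟩u)` on `D₂`.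
Consequently, for a unit `v ∈ D₂` the self-adjoint operator `P_v` satisfies `P_v² = τ P_v` on
`v^⊥ ∩ D₂`, which is therefore `V_v(0) ⊕ V_v(τ)`. Parallelism at `(v,z)` and `(u,z)` shows that
for a unit `u ∈ V_v(τ)` also `v ∈ V_u(τ)` and `V_u(0) ⊆ V_v(τ)`, so the blocks
`span{v} ⊕ V_v(0)` and `span{u} ⊕ V_u(0)` are orthogonal. Since a unit vector of `D₂` orthogonal
to a block `span{v} ⊕ V_v(0)` lies in `V_v(τ)`, greedily adding such vectors exhausts `D₂`.
-/

open scoped RealInnerProductSpace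
open Module Submodule

noncomputable section

variable {V : Type*} [NormedAddCommGroup V] [InnerProductSpace ℝ V]

/-- The curvature-type operator built from `ε` and the difference tensor `K`:
`R(X,Y)Z = ε(⟨Y,Z⟩X − ⟨X,Z⟩Y) − K(X,K(Y,Z)) + K(Y,K(X,Z))`. -/
def Rc (ε : ℝ) (K : V →ₗ[ℝ] V →ₗ[ℝ] V) (X Y Z : V) : V :=
  ε • (⟪Y, Z⟫ • X - ⟪X, Z⟫ • Y) - K X (K Y Z) + K Y (K X Z)

/-- The bilinear map `L(v₁,v₂) = K(v₁,v₂) − (λ₁/2)⟨v₁,v₂⟩ e₁`. -/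
def Lop (lam1 : ℝ) (e1 : V) (K : V →ₗ[ℝ] V →ₗ[ℝ] V) (v1 v2 : V) : V :=
  K v1 v2 - (lam1 / 2 * ⟪v1, v2⟫) • e1

/-- The distribution `D₂ = {v : v ⟂ e₁, K(e₁,v) = (λ₁/2)v}`. -/
def D2s (lam1 : ℝ) (e1 : V) (K : V →ₗ[ℝ] V →ₗ[ℝ] V) : Submodule ℝ V :=
  (ℝ ∙ e1)ᗮ ⊓ Module.End.eigenspace (K e1) (lam1 / 2)

/-- The distribution `D₃ = {w : w ⟂ e₁, K(e₁,w) = μw}`. -/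
def D3s (mu : ℝ) (e1 : V) (K : V →ₗ[ℝ] V →ₗ[ℝ] V) : Submodule ℝ V :=
  (ℝ ∙ e1)ᗮ ⊓ Module.End.eigenspace (K e1) mu

/-- The operator `P_v(ṽ) = K(v, L(v,ṽ))`, as a linear endomorphism of `V`. -/
def Pop (lam1 : ℝ) (e1 : V) (K : V →ₗ[ℝ] V →ₗ[ℝ] V) (v : V) : V →ₗ[ℝ] V :=
  (K v) ∘ₗ (K v - (lam1 / 2) •
    ((LinearMap.toSpanSingleton ℝ V e1) ∘ₗ (innerSL ℝ v).toLinearMap))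

/-- The eigenspace `V_v(c)` of `P_v` within the orthogonal complement of `v` in `D₂`. -/
def Vvs (lam1 c : ℝ) (e1 : V) (K : V →ₗ[ℝ] V →ₗ[ℝ] V) (v : V) : Submodule ℝ V :=
  D2s lam1 e1 K ⊓ (ℝ ∙ v)ᗮ ⊓ Module.End.eigenspace (Pop lam1 e1 K v) c

namespace Submodule

variable {D : Submodule ℝ V} (C : V → Submodule ℝ V) (R : V → V → Prop)

theorem exists_finset_superset_iSup_eq [FiniteDimensional ℝ D]
    (hC : ∀ v ∈ D, ‖v‖ = 1 → v ∈ C v ∧ C v ≤ D)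
    (hext : ∀ v ∈ D, ‖v‖ = 1 → ∀ u ∈ D, ‖u‖ = 1 → u ∈ (C v)ᗮ → R v u ∧ R u v ∧ C v ⟂ C u)
    (S : Finset V) (hS : ∀ v ∈ S, ‖v‖ = 1 ∧ v ∈ D)
    (hSR : (S : Set V).Pairwise fun v u => R v u ∧ C v ⟂ C u) :
    ∃ T : Finset V, S ⊆ T ∧ (∀ v ∈ T, ‖v‖ = 1 ∧ v ∈ D) ∧
      (T : Set V).Pairwise (fun v u => R v u ∧ C v ⟂ C u) ∧ ⨆ v ∈ T, C v = D := by
  classical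
  induction hN : finrank ℝ ↥(D ⊓ (⨆ v ∈ S, C v)ᗮ) using Nat.strong_induction_on
    generalizing S with
  | _ N ih =>
  have hle : ⨆ v ∈ S, C v ≤ D := iSup₂_le fun v hv => (hC v (hS v hv).2 (hS v hv).1).2
  by_cases hbot : D ⊓ (⨆ v ∈ S, C v)ᗮ = ⊥
  · refine ⟨S, subset_rfl, hS, hSR, ?_⟩
    have := finiteDimensional_of_le hle
    have := sup_orthogonal_inf_of_hasOrthogonalProjection hle
    rwa [inf_comm, hbot, sup_bot_eq] at this
  obtain ⟨u0, hu0, hu0ne⟩ := exists_mem_ne_zero_of_ne_bot hbot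
  set u := (‖u0‖⁻¹ : ℝ) • u0
  have hu : u ∈ D ⊓ (⨆ v ∈ S, C v)ᗮ := smul_mem _ _ hu0
  have hu1 : ‖u‖ = 1 := norm_smul_inv_norm hu0ne
  have hu_ne : u ≠ 0 := norm_ne_zero_iff.1 (hu1 ▸ one_ne_zero)
  have hCu : u ∈ C u := (hC u hu.1 hu1).1
  have huC : ∀ v ∈ S, u ∈ (C v)ᗮ := fun v hv => orthogonal_le (le_biSup C hv) hu.2
  have huS : u ∉ S := fun h => hu_ne <| (inf_orthogonal_eq_bot (C u)).le ⟨hCu, huC u h⟩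
  have hlt : D ⊓ (⨆ v ∈ insert u S, C v)ᗮ < D ⊓ (⨆ v ∈ S, C v)ᗮ := by
    rw [Finset.iSup_insert]
    refine lt_of_le_of_ne (inf_le_inf_left _ (orthogonal_le le_sup_right)) fun h => hu_ne ?_
    exact (inf_orthogonal_eq_bot _).le ⟨le_sup_left (a := C u) hCu, (h ▸ hu).2⟩
  have hS' : ∀ v ∈ insert u S, ‖v‖ = 1 ∧ v ∈ D :=
    Finset.forall_mem_insert _ _ _ |>.2 ⟨⟨hu1, hu.1⟩, hS⟩
  have hSR' : (↑(insert u S) : Set V).Pairwise fun v u => R v u ∧ C v ⟂ C u := by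
    rw [Finset.coe_insert, Set.pairwise_insert]
    refine ⟨hSR, fun v hv _ => ?_⟩
    obtain ⟨hvu, huv, hCvu⟩ := hext v (hS v hv).2 (hS v hv).1 u hu.1 hu1 (huC v hv)
    exact ⟨⟨huv, hCvu.symm⟩, hvu, hCvu⟩
  obtain ⟨T, hST, hT⟩ := ih _ (hN ▸ finrank_lt_finrank_of_lt hlt) (insert u S) hS' hSR' rfl
  exact ⟨T, (Finset.subset_insert u S).trans hST, hT⟩

theorem exists_orthogonal_family_iSup_eq [FiniteDimensional ℝ D] (hD : D ≠ ⊥)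
    (hC : ∀ v ∈ D, ‖v‖ = 1 → v ∈ C v ∧ C v ≤ D)
    (hext : ∀ v ∈ D, ‖v‖ = 1 → ∀ u ∈ D, ‖u‖ = 1 → u ∈ (C v)ᗮ → R v u ∧ R u v ∧ C v ⟂ C u) :
    ∃ (k0 : ℕ) (v : Fin k0 → V), 1 ≤ k0 ∧ (∀ j, ‖v j‖ = 1 ∧ v j ∈ D) ∧
      (∀ j l, j ≠ l → R (v j) (v l) ∧ C (v j) ⟂ C (v l)) ∧ ⨆ j, C (v j) = D := by
  obtain ⟨u0, hu0, hu0ne⟩ := exists_mem_ne_zero_of_ne_bot hD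
  obtain ⟨T, hsub, hT, hTR, hTD⟩ := exists_finset_superset_iSup_eq C R hC hext
    {(‖u0‖⁻¹ : ℝ) • u0} (by simpa using ⟨norm_smul_inv_norm hu0ne, smul_mem _ _ hu0⟩) (by simp)
  let v : Fin T.card → V := fun j => T.equivFin.symm j
  have hvT : ∀ j, v j ∈ T := fun j => (T.equivFin.symm j).2
  refine ⟨T.card, v, Finset.card_pos.2 ⟨_, hsub (Finset.mem_singleton_self _)⟩,
    fun j => hT _ (hvT j), fun j l hjl => hTR (hvT j) (hvT l) ?_, ?_⟩
  · exact fun h => hjl (T.equivFin.symm.injective (Subtype.ext h))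
  · refine hTD ▸ le_antisymm (iSup_le fun j => le_biSup C (hvT j)) (iSup₂_le fun x hx => ?_)
    exact le_iSup_of_le (T.equivFin ⟨x, hx⟩) (by simp [v])

end Submodule

theorem eq_smul_of_inner_eq {a b : V} {c : ℝ} (haa : ⟪a, a⟫ = c ^ 2 * ⟪b, b⟫)
    (hab : ⟪a, b⟫ = c * ⟪b, b⟫) : a = c • b := by
  rw [← sub_eq_zero, ← inner_self_eq_zero (𝕜 := ℝ)]
  simp only [inner_sub_left, inner_sub_right, real_inner_smul_left, real_inner_smul_right,
    real_inner_comm a b, haa, hab]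
  ring

theorem K_eq_smul_add_Lop {K : V →ₗ[ℝ] V →ₗ[ℝ] V} (lam1 : ℝ) (e1 a b : V) :
    K a b = (lam1 / 2 * ⟪a, b⟫) • e1 + Lop lam1 e1 K a b := by
  simp [Lop]

section Pointwise

variable {ε lam1 μ c : ℝ} {e1 : V} {K : V →ₗ[ℝ] V →ₗ[ℝ] V}

theorem Rc_smul_add (X Y : V) (a : ℝ) (z z' : V) :
    Rc ε K X Y (a • z + z') = a • Rc ε K X Y z + Rc ε K X Y z' := by
  simp only [Rc, inner_add_right, real_inner_smul_right, map_add, map_smul]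
  module

theorem Rc_zero (X Y : V) : Rc ε K X Y 0 = 0 := by
  simp [Rc]

theorem Pop_apply (v x : V) : Pop lam1 e1 K v x = K v (Lop lam1 e1 K v x) := by
  simp [Pop, Lop, smul_smul]

theorem mem_D2s_iff {x : V} : x ∈ D2s lam1 e1 K ↔ ⟪e1, x⟫ = 0 ∧ K e1 x = (lam1 / 2) • x := by
  simp [D2s, mem_orthogonal_singleton_iff_inner_right]

theorem mem_D3s_iff {x : V} : x ∈ D3s μ e1 K ↔ ⟪e1, x⟫ = 0 ∧ K e1 x = μ • x := by
  simp [D3s, mem_orthogonal_singleton_iff_inner_right]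

theorem mem_Vvs_iff {v x : V} : x ∈ Vvs lam1 c e1 K v ↔
    x ∈ D2s lam1 e1 K ∧ ⟪v, x⟫ = 0 ∧ Pop lam1 e1 K v x = c • x := by
  simp [Vvs, mem_orthogonal_singleton_iff_inner_right, and_assoc]

theorem K_eq_zero_of_Lop_eq_zero {u z : V} (huz : ⟪u, z⟫ = 0) (hL : Lop lam1 e1 K u z = 0) :
    K u z = 0 := by
  rw [K_eq_smul_add_Lop lam1 e1, huz, hL, mul_zero, zero_smul, add_zero]

theorem Vvs_le_D2s (c : ℝ) (v : V) : Vvs lam1 c e1 K v ≤ D2s lam1 e1 K :=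
  inf_le_left.trans inf_le_left

theorem Vvs_le_orthogonal (c : ℝ) (v : V) : Vvs lam1 c e1 K v ≤ (ℝ ∙ v)ᗮ :=
  inf_le_left.trans inf_le_right

end Pointwise

structure IsCaseC (ε lam1 η μ τ : ℝ) (e1 : V) (K : V →ₗ[ℝ] V →ₗ[ℝ] V) : Prop where
  symm : ∀ X Y : V, K X Y = K Y X
  cubic : ∀ X Y Z : V, ⟪K X Y, Z⟫ = ⟪K X Z, Y⟫
  par : ∀ X Y Z U : V, Rc ε K X Y (K Z U) = K (Rc ε K X Y Z) U + K Z (Rc ε K X Y U)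
  norm_e1 : ‖e1‖ = 1
  lam1_eq : lam1 = ⟪K e1 e1, e1⟫
  lam1_pos : 0 < lam1
  η_pos : 0 < η
  ε_eq : ε = lam1 ^ 2 / 4 - η ^ 2
  μ_eq : μ = lam1 / 2 - η
  τ_eq : τ = η * (η + lam1 / 2) / 4
  split : (ℝ ∙ e1) ⊔ D2s lam1 e1 K ⊔ D3s μ e1 K = ⊤
  Lop_mem : ∀ v ∈ D2s lam1 e1 K, ∀ u ∈ D2s lam1 e1 K, Lop lam1 e1 K v u ∈ D3s μ e1 K
  K_mem : ∀ v ∈ D2s lam1 e1 K, ∀ w ∈ D3s μ e1 K, K v w ∈ D2s lam1 e1 K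

namespace IsCaseC

variable {ε lam1 η μ τ : ℝ} {e1 : V} {K : V →ₗ[ℝ] V →ₗ[ℝ] V}

local notation "D₂" => D2s lam1 e1 K
local notation "D₃" => D3s μ e1 K
local notation "L" => Lop lam1 e1 K
local notation "P" => Pop lam1 e1 K

theorem τ_pos (h : IsCaseC ε lam1 η μ τ e1 K) : 0 < τ := by
  rw [h.τ_eq]
  have := h.η_pos
  have := h.lam1_pos
  positivity

theorem inner_e1_Lop (h : IsCaseC ε lam1 η μ τ e1 K) {v u : V} (hv : v ∈ D₂) (hu : u ∈ D₂) :
    ⟪e1, L v u⟫ = 0 :=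
  (mem_D3s_iff.1 (h.Lop_mem v hv u hu)).1

theorem inner_eq_zero_of_mem_D2s_of_mem_D3s (h : IsCaseC ε lam1 η μ τ e1 K) {x w : V}
    (hx : x ∈ D₂) (hw : w ∈ D₃) : ⟪x, w⟫ = 0 := by
  have hc := h.cubic e1 x w
  rw [(mem_D2s_iff.1 hx).2, (mem_D3s_iff.1 hw).2, real_inner_smul_left, real_inner_smul_left,
    real_inner_comm x w, h.μ_eq] at hc
  have : η * ⟪x, w⟫ = 0 := by linarith
  exact (mul_eq_zero.1 this).resolve_left h.η_pos.ne'

theorem mem_D3s_of_orthogonal (h : IsCaseC ε lam1 η μ τ e1 K) {x : V} (hxe : ⟪e1, x⟫ = 0)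
    (hxD : ∀ y ∈ D₂, ⟪y, x⟫ = 0) : x ∈ D₃ := by
  have hx : x ∈ (ℝ ∙ e1) ⊔ D₂ ⊔ D₃ := h.split ▸ mem_top
  obtain ⟨_, hab, c, hc, rfl⟩ := mem_sup.1 hx
  obtain ⟨_, ha, b, hb, rfl⟩ := mem_sup.1 hab
  obtain ⟨t, rfl⟩ := mem_span_singleton.1 ha
  have hbc := h.inner_eq_zero_of_mem_D2s_of_mem_D3s hb hc
  have he1 : ⟪e1, e1⟫ = 1 := inner_self_eq_one_of_norm_eq_one h.norm_e1
  have ht : t = 0 := by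
    rw [inner_add_right, inner_add_right, real_inner_smul_right, he1, (mem_D2s_iff.1 hb).1,
      (mem_D3s_iff.1 hc).1] at hxe
    linarith
  subst ht
  have hb0 : b = 0 := by
    have := hxD b hb
    simp only [zero_smul, zero_add, inner_add_right, hbc, add_zero] at this
    exact inner_self_eq_zero.1 this
  simpa [hb0] using hc

theorem K_e1_e1 (h : IsCaseC ε lam1 η μ τ e1 K) : K e1 e1 = lam1 • e1 := by
  have he1 : ⟪e1, e1⟫ = 1 := inner_self_eq_one_of_norm_eq_one h.norm_e1
  set x := K e1 e1 - lam1 • e1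
  have hxe : ⟪e1, x⟫ = 0 := by
    rw [inner_sub_right, real_inner_smul_right, he1, real_inner_comm, ← h.lam1_eq]
    ring
  have hxe' : ⟪x, e1⟫ = 0 := by rw [real_inner_comm]; exact hxe
  have hx : x ∈ D₃ := h.mem_D3s_of_orthogonal hxe fun y hy => by
    have hc := h.cubic e1 e1 y
    rw [(mem_D2s_iff.1 hy).2, real_inner_smul_left, real_inner_comm e1 y,
      (mem_D2s_iff.1 hy).1] at hc
    rw [inner_sub_right, real_inner_smul_right, real_inner_comm, hc, real_inner_comm,
      (mem_D2s_iff.1 hy).1]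
    ring
  have hc := h.cubic e1 e1 x
  rw [(mem_D3s_iff.1 hx).2, real_inner_smul_left, hxe'] at hc
  have hxx : ⟪K e1 e1 - lam1 • e1, x⟫ = 0 := by
    rw [inner_sub_left, real_inner_smul_left, hc, hxe]
    ring
  exact sub_eq_zero.1 (inner_self_eq_zero.1 hxx)

theorem K_apply_e1 (h : IsCaseC ε lam1 η μ τ e1 K) {v : V} (hv : v ∈ D₂) :
    K v e1 = (lam1 / 2) • v := by
  rw [h.symm]; exact (mem_D2s_iff.1 hv).2

theorem Lop_comm (h : IsCaseC ε lam1 η μ τ e1 K) (a b : V) : L a b = L b a := by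
  simp only [Lop, h.symm a b, real_inner_comm a b]

theorem Rc_e1_of_mem_D2s_e1 (h : IsCaseC ε lam1 η μ τ e1 K) {v : V} (hv : v ∈ D₂) :
    Rc ε K e1 v e1 = η ^ 2 • v := by
  have hve : ⟪v, e1⟫ = 0 := by rw [real_inner_comm]; exact (mem_D2s_iff.1 hv).1
  simp only [Rc, h.K_apply_e1 hv, hve, h.K_e1_e1, map_smul, (mem_D2s_iff.1 hv).2,
    inner_self_eq_one_of_norm_eq_one h.norm_e1]
  rw [h.ε_eq]; module

theorem Rc_e1_of_mem_D2s (h : IsCaseC ε lam1 η μ τ e1 K) {v u : V} (hv : v ∈ D₂)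
    (hu : u ∈ D₂) : Rc ε K e1 v u = (-(η ^ 2) * ⟪v, u⟫) • e1 + η • L v u := by
  simp only [Rc, K_eq_smul_add_Lop lam1 e1 v u, map_add, map_smul, h.K_e1_e1,
    (mem_D2s_iff.1 hu).2, (mem_D3s_iff.1 (h.Lop_mem v hv u hu)).2, (mem_D2s_iff.1 hu).1]
  rw [h.ε_eq, h.μ_eq]; module

theorem Rc_e1_of_mem_D3s (h : IsCaseC ε lam1 η μ τ e1 K) {v w : V} (hv : v ∈ D₂)
    (hw : w ∈ D₃) : Rc ε K e1 v w = (-η) • K v w := by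
  simp only [Rc, h.inner_eq_zero_of_mem_D2s_of_mem_D3s hv hw, (mem_D3s_iff.1 hw).1,
    (mem_D3s_iff.1 hw).2, map_smul, (mem_D2s_iff.1 (h.K_mem v hv w hw)).2]
  rw [h.μ_eq]; module

theorem inner_K_Lop (h : IsCaseC ε lam1 η μ τ e1 K) {b c : V} (hb : b ∈ D₂) (hc : c ∈ D₂)
    (a d : V) : ⟪K a (L b c), d⟫ = ⟪L a d, L b c⟫ := by
  rw [h.cubic, K_eq_smul_add_Lop lam1 e1 a d, inner_add_left,
    real_inner_smul_left, h.inner_e1_Lop hb hc]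
  ring

theorem K_Lop_cyclic (h : IsCaseC ε lam1 η μ τ e1 K) {v u u' : V} (hv : v ∈ D₂) (hu : u ∈ D₂)
    (hu' : u' ∈ D₂) :
    K v (L u u') + K u' (L v u) + K u (L v u') =
      (lam1 * η / 2) • (⟪u, u'⟫ • v + ⟪v, u⟫ • u' + ⟪v, u'⟫ • u) := by
  have hpar := h.par e1 v u u'
  rw [K_eq_smul_add_Lop lam1 e1 u u', Rc_smul_add, h.Rc_e1_of_mem_D2s_e1 hv,
    h.Rc_e1_of_mem_D3s hv (h.Lop_mem u hu u' hu'), h.Rc_e1_of_mem_D2s hv hu,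
    h.Rc_e1_of_mem_D2s hv hu'] at hpar
  simp only [map_add, map_smul, LinearMap.add_apply, LinearMap.smul_apply,
    (mem_D2s_iff.1 hu').2, h.K_apply_e1 hu, h.symm (L v u) u'] at hpar
  apply smul_right_injective V h.η_pos.ne'
  linear_combination (norm := module) -hpar

theorem K_Lop_self_self (h : IsCaseC ε lam1 η μ τ e1 K) {v : V} (hv : v ∈ D₂) (hv1 : ‖v‖ = 1) :
    K v (L v v) = (lam1 * η / 2) • v := by
  have hc := h.K_Lop_cyclic hv hv hv
  rw [inner_self_eq_one_of_norm_eq_one hv1] at hc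
  linear_combination (norm := module) (1 / 3 : ℝ) • hc

theorem K_Lop_self_of_inner_eq_zero (h : IsCaseC ε lam1 η μ τ e1 K) {v u : V} (hv : v ∈ D₂)
    (hv1 : ‖v‖ = 1) (hu : u ∈ D₂) (hvu : ⟪v, u⟫ = 0) :
    K u (L v v) = (lam1 * η / 2) • u - (2 : ℝ) • K v (L v u) := by
  have hc := h.K_Lop_cyclic hv hv hu
  rw [inner_self_eq_one_of_norm_eq_one hv1, hvu] at hc
  linear_combination (norm := module) hc

theorem two_smul_Lop_K (h : IsCaseC ε lam1 η μ τ e1 K) {v w : V} (hv : v ∈ D₂)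
    (hv1 : ‖v‖ = 1) (hw : w ∈ D₃) :
    (2 : ℝ) • L v (K v w) = (-(η * μ)) • w + K (L v v) w - (μ * ⟪L v v, w⟫) • e1 := by
  have hvw : ⟪v, K v w⟫ = ⟪L v v, w⟫ := by
    rw [real_inner_comm, h.cubic, K_eq_smul_add_Lop lam1 e1 v v,
      inner_add_left, real_inner_smul_left, (mem_D3s_iff.1 hw).1]
    ring
  have hpar := h.par e1 v v w
  rw [h.Rc_e1_of_mem_D2s hv hv, h.Rc_e1_of_mem_D3s hv hw,
    h.Rc_e1_of_mem_D2s hv (h.K_mem v hv w hw)] at hpar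
  simp only [map_add, map_smul, LinearMap.add_apply, LinearMap.smul_apply,
    (mem_D3s_iff.1 hw).2] at hpar
  rw [K_eq_smul_add_Lop lam1 e1 v (K v w), hvw,
    inner_self_eq_one_of_norm_eq_one hv1] at hpar
  apply smul_right_injective V h.η_pos.ne'
  rw [h.μ_eq] at hpar ⊢
  linear_combination (norm := module) hpar

theorem sub_smul_e1_mem_D3s (h : IsCaseC ε lam1 η μ τ e1 K) {w w' : V} (hw : w ∈ D₃)
    (hw' : w' ∈ D₃) : K w w' - (μ * ⟪w, w'⟫) • e1 ∈ D₃ := by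
  refine h.mem_D3s_of_orthogonal ?_ fun y hy => ?_
  · rw [inner_sub_right, real_inner_smul_right, inner_self_eq_one_of_norm_eq_one h.norm_e1,
      real_inner_comm, h.cubic, h.symm, (mem_D3s_iff.1 hw).2, real_inner_smul_left]
    ring
  · have hwy : ⟪K w w', y⟫ = 0 := by
      rw [h.cubic, h.symm w y]
      exact h.inner_eq_zero_of_mem_D2s_of_mem_D3s (h.K_mem y hy w hw) hw'
    rw [inner_sub_right, real_inner_smul_right, real_inner_comm (K w w') y, hwy,
      real_inner_comm e1 y, (mem_D2s_iff.1 hy).1]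
    ring

theorem K_sub_smul_e1 (h : IsCaseC ε lam1 η μ τ e1 K) {v w w' : V} (hv : v ∈ D₂)
    (hw : w ∈ D₃) (hw' : w' ∈ D₃) :
    K v (K w w' - (μ * ⟪w, w'⟫) • e1) =
      (μ * η * ⟪w, w'⟫) • v + K (K v w) w' + K w (K v w') := by
  have hpar := h.par e1 v w w'
  rw [h.Rc_e1_of_mem_D3s hv hw, h.Rc_e1_of_mem_D3s hv hw',
    show K w w' = (μ * ⟪w, w'⟫) • e1 + (K w w' - (μ * ⟪w, w'⟫) • e1) by module, Rc_smul_add,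
    h.Rc_e1_of_mem_D2s_e1 hv, h.Rc_e1_of_mem_D3s hv (h.sub_smul_e1_mem_D3s hw hw')] at hpar
  simp only [map_smul, LinearMap.smul_apply] at hpar
  apply smul_right_injective V h.η_pos.ne'
  linear_combination (norm := module) -hpar

theorem Pop_mem (h : IsCaseC ε lam1 η μ τ e1 K) {v x : V} (hv : v ∈ D₂) (hx : x ∈ D₂) :
    P v x ∈ D₂ :=
  Pop_apply v x ▸ h.K_mem v hv _ (h.Lop_mem v hv x hx)

theorem inner_Pop_left (h : IsCaseC ε lam1 η μ τ e1 K) {v x : V} (hv : v ∈ D₂) (hx : x ∈ D₂)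
    (y : V) : ⟪P v x, y⟫ = ⟪L v y, L v x⟫ := by
  rw [Pop_apply, h.inner_K_Lop hv hx]

theorem inner_Pop_comm (h : IsCaseC ε lam1 η μ τ e1 K) {v x y : V} (hv : v ∈ D₂) (hx : x ∈ D₂)
    (hy : y ∈ D₂) : ⟪P v x, y⟫ = ⟪P v y, x⟫ := by
  rw [h.inner_Pop_left hv hx, h.inner_Pop_left hv hy, real_inner_comm]

theorem inner_Pop_self_right (h : IsCaseC ε lam1 η μ τ e1 K) {v x : V} (hv : v ∈ D₂)
    (hv1 : ‖v‖ = 1) (hx : x ∈ D₂) : ⟪P v x, v⟫ = lam1 * η / 2 * ⟪v, x⟫ := by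
  rw [h.inner_Pop_comm hv hx hv, Pop_apply, h.K_Lop_self_self hv hv1, real_inner_smul_left]

theorem Pop_Pop (h : IsCaseC ε lam1 η μ τ e1 K) {v u : V} (hv : v ∈ D₂) (hv1 : ‖v‖ = 1)
    (hu : u ∈ D₂) (hvu : ⟪v, u⟫ = 0) : P v (P v u) = τ • P v u := by
  have hPv : ⟪v, P v u⟫ = 0 := by
    rw [real_inner_comm, h.inner_Pop_self_right hv hv1 hu, hvu, mul_zero]
  have hL : ⟪L v v, L v u⟫ = 0 := by
    rw [← h.inner_Pop_left hv hu, real_inner_comm, hPv]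
  have hPu := h.Pop_mem hv hu
  simp only [Pop_apply] at hPv hPu ⊢
  have hw := h.Lop_mem v hv u hu
  -- `K v` applied to `two_smul_Lop_K` at `w = L v u` produces `P_v² u`; the cross terms
  -- `K (L v v) (P v u)` and `K (P v v) (L v u)` are eliminated by the other three identities.
  have hKvLK := congrArg (K v) (h.two_smul_Lop_K hv hv1 hw)
  simp only [map_add, map_smul, map_sub] at hKvLK
  have hKvK := h.K_sub_smul_e1 hv (h.Lop_mem v hv v hv) hw
  rw [map_sub (K v), map_smul (K v)] at hKvK
  have hLvvPu : K (L v v) (K v (L v u)) =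
      (lam1 * η / 2) • K v (L v u) - (2 : ℝ) • K v (L v (K v (L v u))) := by
    rw [h.symm]; exact h.K_Lop_self_of_inner_eq_zero hv hv1 hPu hPv
  have hPvvLu : K (K v (L v v)) (L v u) = (lam1 * η / 2) • K v (L v u) := by
    rw [h.K_Lop_self_self hv hv1, map_smul, LinearMap.smul_apply]
  rw [hL, h.μ_eq] at hKvLK hKvK
  rw [h.τ_eq]
  linear_combination (norm := module) (1 / 4 : ℝ) • (hKvLK + hKvK + hLvvPu + hPvvLu)

theorem K_K_Lop_add_three_smul (h : IsCaseC ε lam1 η μ τ e1 K) {v u z : V} (hv : v ∈ D₂)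
    (hz : z ∈ D₂) (hvu : ⟪v, u⟫ = 0) (hvz : ⟪v, z⟫ = 0) (huz : ⟪u, z⟫ = 0) (hKuz : K u z = 0) :
    K z (K z (L v u)) + (3 : ℝ) • K u (K z (L v z)) = (4 * τ * ⟪z, z⟫) • L v u := by
  have hKvLzz : K v (L z z) = (lam1 * η / 2 * ⟪z, z⟫) • v - (2 : ℝ) • K z (L v z) := by
    have hc := h.K_Lop_cyclic hv hz hz
    rw [hvz] at hc
    linear_combination (norm := module) hc
  have hRvzu : Rc ε K v z u = K z (L v u) := by
    simp only [Rc, h.symm z u, hKuz, map_zero, K_eq_smul_add_Lop lam1 e1 v u, map_add,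
      map_smul]
    rw [real_inner_comm, huz, hvu, h.K_apply_e1 hz]
    module
  have hRvzz : Rc ε K v z z = (-(4 * τ) * ⟪z, z⟫) • v + (3 : ℝ) • K z (L v z) := by
    simp only [Rc, K_eq_smul_add_Lop lam1 e1 z z, K_eq_smul_add_Lop lam1 e1 v z, map_add,
      map_smul, hKvLzz, h.K_apply_e1 hv, h.K_apply_e1 hz]
    rw [hvz, h.ε_eq, h.τ_eq]
    module
  have hpar := h.par v z u z
  rw [hKuz, Rc_zero, hRvzu, hRvzz] at hpar
  simp only [map_add, map_smul, h.symm (K z (L v u)) z, K_eq_smul_add_Lop lam1 e1 u v,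
    h.Lop_comm u v, real_inner_comm v u, hvu] at hpar
  linear_combination (norm := module) -hpar

theorem three_smul_K_K_Lop_add (h : IsCaseC ε lam1 η μ τ e1 K) {v u z : V} (hv : v ∈ D₂)
    (hu : u ∈ D₂) (hz : z ∈ D₂) (hvu : ⟪v, u⟫ = 0) (hvz : ⟪v, z⟫ = 0) (huz : ⟪u, z⟫ = 0)
    (hLuz : L u z = 0) (hKuz : K u z = 0) :
    (3 : ℝ) • K z (K z (L v u)) + K u (K z (L v z)) = (4 * τ * ⟪z, z⟫) • L v u := by
  have hKuLzz : K u (L z z) = (lam1 * η / 2 * ⟪z, z⟫) • u := by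
    have hc := h.K_Lop_cyclic hu hz hz
    rw [huz, hLuz, map_zero] at hc
    linear_combination (norm := module) hc
  have hKuLvz : K u (L v z) = -K z (L v u) := by
    have hc := h.K_Lop_cyclic hv hu hz
    rw [huz, hvu, hvz, hLuz, map_zero] at hc
    linear_combination (norm := module) hc
  have hRuzv : Rc ε K u z v = (2 : ℝ) • K z (L v u) := by
    simp only [Rc, h.symm z v, K_eq_smul_add_Lop lam1 e1 v z, K_eq_smul_add_Lop lam1 e1 u v,
      map_add, map_smul, hKuLvz, h.K_apply_e1 hu, h.K_apply_e1 hz, h.Lop_comm u v]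
    rw [real_inner_comm v z, real_inner_comm v u, hvu, hvz]
    module
  have hRuzz : Rc ε K u z z = (-(4 * τ) * ⟪z, z⟫) • u := by
    simp only [Rc, hKuz, map_zero, K_eq_smul_add_Lop lam1 e1 z z, map_add, map_smul,
      h.K_apply_e1 hu, hKuLzz]
    rw [huz, h.ε_eq, h.τ_eq]
    module
  have hw := h.Lop_mem v hv z hz
  have hRuzL : Rc ε K u z (L v z) = -K u (K z (L v z)) - K z (K z (L v u)) := by
    simp only [Rc, h.inner_eq_zero_of_mem_D2s_of_mem_D3s hz hw,
      h.inner_eq_zero_of_mem_D2s_of_mem_D3s hu hw, hKuLvz,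
      map_neg]
    module
  have hpar := h.par u z v z
  rw [K_eq_smul_add_Lop lam1 e1 v z, Rc_smul_add, hRuzL, hRuzv, hRuzz] at hpar
  simp only [map_smul, LinearMap.smul_apply, h.symm (K z (L v u)) z,
    K_eq_smul_add_Lop lam1 e1 v u, hvu, hvz] at hpar
  linear_combination (norm := module) -hpar

theorem inner_Pop_eq_zero (h : IsCaseC ε lam1 η μ τ e1 K) {v x : V} (hv : v ∈ D₂)
    (hv1 : ‖v‖ = 1) (hx : x ∈ D₂) (hvx : ⟪v, x⟫ = 0) : ⟪v, P v x⟫ = 0 := by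
  rw [real_inner_comm, h.inner_Pop_self_right hv hv1 hx, hvx, mul_zero]

theorem sub_inv_smul_Pop_mem_Vvs_zero (h : IsCaseC ε lam1 η μ τ e1 K) {v x : V} (hv : v ∈ D₂)
    (hv1 : ‖v‖ = 1) (hx : x ∈ D₂) (hvx : ⟪v, x⟫ = 0) : x - τ⁻¹ • P v x ∈ Vvs lam1 0 e1 K v := by
  refine mem_Vvs_iff.2 ⟨sub_mem hx (smul_mem _ _ (h.Pop_mem hv hx)), ?_, ?_⟩
  · rw [inner_sub_right, real_inner_smul_right, hvx, h.inner_Pop_eq_zero hv hv1 hx hvx]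
    ring
  · rw [map_sub, map_smul, h.Pop_Pop hv hv1 hx hvx, smul_smul, inv_mul_cancel₀ h.τ_pos.ne',
      one_smul, sub_self, zero_smul]

theorem inv_smul_Pop_mem_Vvs_tau (h : IsCaseC ε lam1 η μ τ e1 K) {v x : V} (hv : v ∈ D₂)
    (hv1 : ‖v‖ = 1) (hx : x ∈ D₂) (hvx : ⟪v, x⟫ = 0) : τ⁻¹ • P v x ∈ Vvs lam1 τ e1 K v := by
  refine mem_Vvs_iff.2 ⟨smul_mem _ _ (h.Pop_mem hv hx), ?_, ?_⟩
  · rw [real_inner_smul_right, h.inner_Pop_eq_zero hv hv1 hx hvx, mul_zero]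
  · rw [map_smul, h.Pop_Pop hv hv1 hx hvx, smul_comm]

theorem Vvs_zero_isOrtho_Vvs_tau (h : IsCaseC ε lam1 η μ τ e1 K) {v : V} (hv : v ∈ D₂) :
    Vvs lam1 0 e1 K v ⟂ Vvs lam1 τ e1 K v := by
  refine isOrtho_iff_inner_eq.2 fun x hx y hy => ?_
  obtain ⟨hxD, -, hx0⟩ := mem_Vvs_iff.1 hx
  obtain ⟨hyD, -, hyτ⟩ := mem_Vvs_iff.1 hy
  have hPxy := h.inner_Pop_comm hv hyD hxD
  rw [hyτ, hx0, real_inner_smul_left, zero_smul, inner_zero_left, real_inner_comm] at hPxy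
  exact (mul_eq_zero.1 hPxy).resolve_left h.τ_pos.ne'

theorem mem_Vvs_tau_of_mem_orthogonal (h : IsCaseC ε lam1 η μ τ e1 K) {v x : V} (hv : v ∈ D₂)
    (hv1 : ‖v‖ = 1) (hx : x ∈ D₂) (hvx : ⟪v, x⟫ = 0) (hxV : x ∈ (Vvs lam1 0 e1 K v)ᗮ) :
    x ∈ Vvs lam1 τ e1 K v := by
  have h0 := h.sub_inv_smul_Pop_mem_Vvs_zero hv hv1 hx hvx
  have hτ := h.inv_smul_Pop_mem_Vvs_tau hv hv1 hx hvx
  have hx0 : x - τ⁻¹ • P v x = 0 := by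
    refine inner_self_eq_zero (𝕜 := ℝ) |>.1 ?_
    rw [inner_sub_right, inner_right_of_mem_orthogonal h0 hxV,
      (h.Vvs_zero_isOrtho_Vvs_tau hv).inner_eq h0 hτ, sub_zero]
  rwa [sub_eq_zero.1 hx0]

theorem Pop_eq_smul_of_inner_Lop_self (h : IsCaseC ε lam1 η μ τ e1 K) {v z : V} (hv : v ∈ D₂)
    (hv1 : ‖v‖ = 1) (hz : z ∈ D₂) (hvz : ⟪v, z⟫ = 0) (hL : ⟪L v z, L v z⟫ = τ * ⟪z, z⟫) :
    P v z = τ • z := by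
  have hPz : ⟪P v z, z⟫ = τ * ⟪z, z⟫ := by rw [h.inner_Pop_left hv hz, hL]
  refine eq_smul_of_inner_eq ?_ hPz
  rw [h.inner_Pop_comm hv hz (h.Pop_mem hv hz), h.Pop_Pop hv hv1 hz hvz, real_inner_smul_left,
    hPz]
  ring

theorem mem_Vvs_tau_comm (h : IsCaseC ε lam1 η μ τ e1 K) {v u : V} (hv : v ∈ D₂)
    (hv1 : ‖v‖ = 1) (hu1 : ‖u‖ = 1) (hu : u ∈ Vvs lam1 τ e1 K v) : v ∈ Vvs lam1 τ e1 K u := by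
  obtain ⟨huD, hvu, hPvu⟩ := mem_Vvs_iff.1 hu
  have huv : ⟪u, v⟫ = 0 := by rw [real_inner_comm]; exact hvu
  refine mem_Vvs_iff.2 ⟨hv, huv, h.Pop_eq_smul_of_inner_Lop_self huD hu1 hv huv ?_⟩
  rw [h.Lop_comm u v, ← h.inner_Pop_left hv huD, hPvu, real_inner_smul_left,
    inner_self_eq_one_of_norm_eq_one hu1, inner_self_eq_one_of_norm_eq_one hv1]

theorem K_K_Lop_eq (h : IsCaseC ε lam1 η μ τ e1 K) {v u z : V} (hv : v ∈ D₂) (hu : u ∈ D₂)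
    (hz : z ∈ D₂) (hvu : ⟪v, u⟫ = 0) (hvz : ⟪v, z⟫ = 0) (huz : ⟪u, z⟫ = 0) (hLuz : L u z = 0) :
    K z (K z (L v u)) = (τ * ⟪z, z⟫) • L v u := by
  have hKuz := K_eq_zero_of_Lop_eq_zero huz hLuz
  have hvzuz := h.K_K_Lop_add_three_smul hv hz hvu hvz huz hKuz
  have huzvz := h.three_smul_K_K_Lop_add hv hu hz hvu hvz huz hLuz hKuz
  linear_combination (norm := module) (-1 / 8 : ℝ) • hvzuz + (3 / 8 : ℝ) • huzvz

theorem Lop_eq_zero_of_Pop_eq_zero (h : IsCaseC ε lam1 η μ τ e1 K) {u z : V} (hu : u ∈ D₂)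
    (hz : z ∈ D₂) (hPz : P u z = 0) : L u z = 0 :=
  inner_self_eq_zero (𝕜 := ℝ) |>.1 (by rw [← h.inner_Pop_left hu hz, hPz, inner_zero_left])

theorem Vvs_zero_le_Vvs_tau (h : IsCaseC ε lam1 η μ τ e1 K) {v u : V} (hv : v ∈ D₂)
    (hv1 : ‖v‖ = 1) (hu1 : ‖u‖ = 1) (hu : u ∈ Vvs lam1 τ e1 K v) :
    Vvs lam1 0 e1 K u ≤ Vvs lam1 τ e1 K v := by
  intro z hz
  obtain ⟨huD, hvu, hPvu⟩ := mem_Vvs_iff.1 hu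
  obtain ⟨hzD, huz, hPuz⟩ := mem_Vvs_iff.1 hz
  rw [zero_smul] at hPuz
  have hPuv : P u v = τ • v := (mem_Vvs_iff.1 (h.mem_Vvs_tau_comm hv hv1 hu1 hu)).2.2
  have hLuz := h.Lop_eq_zero_of_Pop_eq_zero huD hzD hPuz
  have hvz : ⟪v, z⟫ = 0 := by
    have hPzv := h.inner_Pop_comm huD hzD hv
    rw [hPuz, inner_zero_left, hPuv, real_inner_smul_left] at hPzv
    exact (mul_eq_zero.1 hPzv.symm).resolve_left h.τ_pos.ne'
  refine mem_Vvs_iff.2 ⟨hzD, hvz, h.Pop_eq_smul_of_inner_Lop_self hv hv1 hzD hvz ?_⟩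
  have hLvu : ⟪L v u, L v u⟫ = τ := by
    rw [← h.inner_Pop_left hv huD, hPvu, real_inner_smul_left,
      inner_self_eq_one_of_norm_eq_one hu1, mul_one]
  have hKKL : ⟪K u (K z (L v z)), L v u⟫ = τ * ⟪L v z, L v z⟫ := by
    rw [h.cubic, h.Lop_comm v u, ← Pop_apply, hPuv, real_inner_smul_left, real_inner_comm,
      h.inner_K_Lop hv hzD, h.Lop_comm z v]
  have hpair := congrArg (⟪·, L v u⟫)
    (h.K_K_Lop_add_three_smul hv hzD hvu hvz huz (K_eq_zero_of_Lop_eq_zero huz hLuz))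
  simp only [inner_add_left, real_inner_smul_left, h.K_K_Lop_eq hv huD hzD hvu hvz huz hLuz,
    hLvu, hKKL] at hpair
  exact mul_left_cancel₀ h.τ_pos.ne' (by linarith)

theorem isOrtho_sup_Vvs_zero (h : IsCaseC ε lam1 η μ τ e1 K) {v u : V} (hv : v ∈ D₂)
    (hv1 : ‖v‖ = 1) (hu1 : ‖u‖ = 1) (hu : u ∈ Vvs lam1 τ e1 K v)
    (huV : u ∈ (Vvs lam1 0 e1 K v)ᗮ) :
    (ℝ ∙ v) ⊔ Vvs lam1 0 e1 K v ⟂ (ℝ ∙ u) ⊔ Vvs lam1 0 e1 K u := by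
  have hle := h.Vvs_zero_le_Vvs_tau hv hv1 hu1 hu
  rw [isOrtho_sup_left, isOrtho_sup_right, isOrtho_sup_right]
  refine ⟨⟨isOrtho_span.2 ?_, ?_⟩, ?_, (h.Vvs_zero_isOrtho_Vvs_tau hv).mono_right hle⟩
  · simpa using (mem_Vvs_iff.1 hu).2.1
  · exact (isOrtho_iff_le.2 (hle.trans (Vvs_le_orthogonal τ v))).symm
  · exact (isOrtho_iff_le.2 (span_singleton_le_iff_mem _ _ |>.2 huV)).symm

theorem mem_Vvs_tau_and_isOrtho (h : IsCaseC ε lam1 η μ τ e1 K) {v u : V} (hv : v ∈ D₂)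
    (hv1 : ‖v‖ = 1) (hu : u ∈ D₂) (hu1 : ‖u‖ = 1)
    (huC : u ∈ ((ℝ ∙ v) ⊔ Vvs lam1 0 e1 K v)ᗮ) :
    u ∈ Vvs lam1 τ e1 K v ∧ v ∈ Vvs lam1 τ e1 K u ∧
      (ℝ ∙ v) ⊔ Vvs lam1 0 e1 K v ⟂ (ℝ ∙ u) ⊔ Vvs lam1 0 e1 K u := by
  have hvu : ⟪v, u⟫ = 0 :=
    inner_right_of_mem_orthogonal (mem_sup_left (mem_span_singleton_self v)) huC
  have huV : u ∈ (Vvs lam1 0 e1 K v)ᗮ := orthogonal_le le_sup_right huC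
  have huτ := h.mem_Vvs_tau_of_mem_orthogonal hv hv1 hu hvu huV
  exact ⟨huτ, h.mem_Vvs_tau_comm hv hv1 hu1 huτ, h.isOrtho_sup_Vvs_zero hv hv1 hu1 huτ huV⟩

end IsCaseC

theorem stmt_14_general {V : Type*} [NormedAddCommGroup V] [InnerProductSpace ℝ V]
    (m : ℕ)
    (ε : ℝ)
    (K : V →ₗ[ℝ] V →ₗ[ℝ] V)
    (hKsymm : ∀ X Y : V, K X Y = K Y X)
    (hKcub : ∀ X Y Z : V, ⟪K X Y, Z⟫ = ⟪K X Z, Y⟫)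
    (hpar : ∀ X Y Z U : V,
      Rc ε K X Y (K Z U) = K (Rc ε K X Y Z) U + K Z (Rc ε K X Y U))
    (e1 : V) (he1 : ‖e1‖ = 1)
    (lam1 η μ τ : ℝ)
    (hlam1 : lam1 = ⟪K e1 e1, e1⟫) (hlam1pos : 0 < lam1)
    (hdisc : 0 < lam1 ^ 2 - 4 * ε)
    (hη : η = Real.sqrt (lam1 ^ 2 - 4 * ε) / 2)
    (hμ : μ = (lam1 - Real.sqrt (lam1 ^ 2 - 4 * ε)) / 2)
    (hτ : τ = η * (η + lam1 / 2) / 4)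
    (hm2 : 2 ≤ m)
    (hdimD2 : finrank ℝ (D2s lam1 e1 K) = m - 1)
    (hsplit : (ℝ ∙ e1) ⊔ D2s lam1 e1 K ⊔ D3s μ e1 K = ⊤)
    (hLD3 : ∀ v1 ∈ D2s lam1 e1 K, ∀ v2 ∈ D2s lam1 e1 K,
      Lop lam1 e1 K v1 v2 ∈ D3s μ e1 K)
    (hKD2 : ∀ v ∈ D2s lam1 e1 K, ∀ w ∈ D3s μ e1 K, K v w ∈ D2s lam1 e1 K)
    :
    ∃ (k0 : ℕ) (v : Fin k0 → V), 1 ≤ k0 ∧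
      (∀ j, ‖v j‖ = 1 ∧ v j ∈ D2s lam1 e1 K) ∧
      (∀ j l, j ≠ l →
        ∀ x ∈ (ℝ ∙ v j) ⊔ Vvs lam1 0 e1 K (v j),
          ∀ y ∈ (ℝ ∙ v l) ⊔ Vvs lam1 0 e1 K (v l), ⟪x, y⟫ = 0) ∧
      (⨆ j, (ℝ ∙ v j) ⊔ Vvs lam1 0 e1 K (v j)) = D2s lam1 e1 K ∧
      (∀ j l, j ≠ l → v l ∈ Vvs lam1 τ e1 K (v j)) := by
  have h : IsCaseC ε lam1 η μ τ e1 K :=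
    { symm := hKsymm, cubic := hKcub, par := hpar, norm_e1 := he1, lam1_eq := hlam1,
      lam1_pos := hlam1pos, η_pos := by rw [hη]; positivity
      ε_eq := by rw [hη, div_pow, Real.sq_sqrt hdisc.le]; ring
      μ_eq := by rw [hμ, hη]; ring
      τ_eq := hτ, split := hsplit, Lop_mem := hLD3, K_mem := hKD2 }
  have : FiniteDimensional ℝ (D2s lam1 e1 K) := Module.finite_of_finrank_pos (by omega)
  have hD2 : D2s lam1 e1 K ≠ ⊥ := fun hbot => by
    rw [hbot, finrank_bot] at hdimD2
    omega
  obtain ⟨k0, v, hk0, hv, hrel, hsup⟩ := exists_orthogonal_family_iSup_eq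
    (fun v => (ℝ ∙ v) ⊔ Vvs lam1 0 e1 K v) (fun v u => u ∈ Vvs lam1 τ e1 K v) hD2
    (fun v hv _ => ⟨mem_sup_left (mem_span_singleton_self v),
      sup_le ((span_singleton_le_iff_mem _ _).2 hv) (Vvs_le_D2s 0 v)⟩)
    (fun _ hv hv1 _ hu hu1 => h.mem_Vvs_tau_and_isOrtho hv hv1 hu hu1)
  exact ⟨k0, v, hk0, hv, fun j l hjl => isOrtho_iff_inner_eq.1 (hrel j l hjl).2, hsup,
    fun j l hjl => (hrel j l hjl).1⟩

/-- Proposition 4.1: `D₂` admits an orthogonal direct sum decomposition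
`D₂ = (span{v₁} ⊕ V_{v₁}(0)) ⊕ ⋯ ⊕ (span{v_{k₀}} ⊕ V_{v_{k₀}}(0))`, with
`v_l ∈ V_{v_j}(τ)` whenever `j ≠ l`. -/
theorem stmt_14 {V : Type*} [NormedAddCommGroup V] [InnerProductSpace ℝ V]
    (n m : ℕ) (hn : finrank ℝ V = n) (hn2 : 2 ≤ n)
    (ε : ℝ) (hε : ε = 1 ∨ ε = -1)
    (K : V →ₗ[ℝ] V →ₗ[ℝ] V)
    (hKsymm : ∀ X Y : V, K X Y = K Y X)
    (hKcub : ∀ X Y Z : V, ⟪K X Y, Z⟫ = ⟪K X Z, Y⟫)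
    (hpar : ∀ X Y Z U : V,
      Rc ε K X Y (K Z U) = K (Rc ε K X Y Z) U + K Z (Rc ε K X Y U))
    (e1 : V) (he1 : ‖e1‖ = 1)
    (lam1 η μ τ : ℝ)
    (hlam1 : lam1 = ⟪K e1 e1, e1⟫) (hlam1pos : 0 < lam1)
    (hmax : ∀ u : V, ‖u‖ = 1 → ⟪K u u, u⟫ ≤ lam1)
    (hdisc : 0 < lam1 ^ 2 - 4 * ε)
    (hη : η = Real.sqrt (lam1 ^ 2 - 4 * ε) / 2)
    (hμ : μ = (lam1 - Real.sqrt (lam1 ^ 2 - 4 * ε)) / 2)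
    (hτ : τ = η * (η + lam1 / 2) / 4)
    (hm2 : 2 ≤ m) (hmn : m ≤ n - 1)
    (hdimD2 : finrank ℝ (D2s lam1 e1 K) = m - 1)
    (hsplit : (ℝ ∙ e1) ⊔ D2s lam1 e1 K ⊔ D3s μ e1 K = ⊤)
    (hLD3 : ∀ v1 ∈ D2s lam1 e1 K, ∀ v2 ∈ D2s lam1 e1 K,
      Lop lam1 e1 K v1 v2 ∈ D3s μ e1 K)
    (hKD2 : ∀ v ∈ D2s lam1 e1 K, ∀ w ∈ D3s μ e1 K, K v w ∈ D2s lam1 e1 K)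
    :
    ∃ (k0 : ℕ) (v : Fin k0 → V), 1 ≤ k0 ∧
      (∀ j, ‖v j‖ = 1 ∧ v j ∈ D2s lam1 e1 K) ∧
      (∀ j l, j ≠ l →
        ∀ x ∈ (ℝ ∙ v j) ⊔ Vvs lam1 0 e1 K (v j),
          ∀ y ∈ (ℝ ∙ v l) ⊔ Vvs lam1 0 e1 K (v l), ⟪x, y⟫ = 0) ∧
      (⨆ j, (ℝ ∙ v j) ⊔ Vvs lam1 0 e1 K (v j)) = D2s lam1 e1 K ∧
      (∀ j l, j ≠ l → v l ∈ Vvs lam1 τ e1 K (v j)) :=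
  stmt_14_general m ε K hKsymm hKcub hpar e1 he1 lam1 η μ τ hlam1 hlam1pos hdisc hη hμ hτ hm2 hdimD2
    hsplit hLD3 hKD2

end
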